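/- arXiv:2402.13242 — 3 statements merged into one kernel-verified Lean document; each statement's English description precedes it below -/
import Mathlib

section
/- Squier's Hermitian form makes the Burau generators unitary: if |s| = 1, then for the matrix J with entries J_{ii} = s + s^{−1}, J_{i,i±1} = −s^{±1} (zero elsewhere), each reduced Burau matrix ρ(σ_i) satisfies ρ(σ_i)* J ρ(σ_i) = J, where * denotes conjugate transpose. -/
open Matrix

theorem Matrix.conjTranspose_fin_two {α : Type*} [Star α] (a b c d : α) :
    !![a, b; c, d]ᴴ = !![star a, star c; star b, star d] := by
  ext i j; fin_cases i <;> fin_cases j <;> rfl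

section Squier

variable {K : Type*} [Field K] [StarRing K] {s : K}

def squierForm (s : K) : Matrix (Fin 2) (Fin 2) K := !![s + s⁻¹, -s⁻¹; -s, s + s⁻¹]

/-- The columns are the images of `E₁, E₂` under `σ₁` (resp. `σ₂` below) in the reduced
Burau representation of the braid group `B₃`. -/
def burau₁ (s : K) : Matrix (Fin 2) (Fin 2) K := !![-(s ^ (-2 : ℤ)), s ^ (-2 : ℤ); 0, 1]

def burau₂ (s : K) : Matrix (Fin 2) (Fin 2) K := !![1, 0; 1, -(s ^ (-2 : ℤ))]

theorem star_zpow_neg_two_of_star_mul_self (hs : star s * s = 1) :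
    star (s ^ (-2 : ℤ)) = s ^ 2 := by
  rw [star_zpow₀, eq_inv_of_mul_eq_one_left hs, _root_.inv_zpow', neg_neg, zpow_ofNat]

theorem conjTranspose_burau₁_mul_squierForm_mul_burau₁ (hs : star s * s = 1) :
    (burau₁ s)ᴴ * squierForm s * burau₁ s = squierForm s := by
  have hs0 : s ≠ 0 := right_ne_zero_of_mul_eq_one hs
  simp only [burau₁, squierForm, conjTranspose_fin_two, star_neg, star_zero, star_one,
    star_zpow_neg_two_of_star_mul_self hs, mul_fin_two, EmbeddingLike.apply_eq_iff_eq,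
    vecCons_inj, and_true]
  refine ⟨⟨?_, ?_⟩, ?_, ?_⟩ <;> field_simp <;> ring

theorem conjTranspose_burau₂_mul_squierForm_mul_burau₂ (hs : star s * s = 1) :
    (burau₂ s)ᴴ * squierForm s * burau₂ s = squierForm s := by
  have hs0 : s ≠ 0 := right_ne_zero_of_mul_eq_one hs
  simp only [burau₂, squierForm, conjTranspose_fin_two, star_neg, star_zero, star_one,
    star_zpow_neg_two_of_star_mul_self hs, mul_fin_two, EmbeddingLike.apply_eq_iff_eq,
    vecCons_inj, and_true]
  refine ⟨⟨?_, ?_⟩, ?_, ?_⟩ <;> field_simp <;> ring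

end Squier

/-- Squier's Hermitian form makes the reduced Burau generators unitary
(verified on the 2-dimensional representation for `n = 3`):
if `|s| = 1` then `ρ(σ_i)* J ρ(σ_i) = J` for `i = 1, 2`. -/
theorem squier_form_unitary (s : ℂ) (hs : ‖s‖ = 1)
    (J ρ₁ ρ₂ : Matrix (Fin 2) (Fin 2) ℂ)
    (hJ : J = !![s + s⁻¹, -s⁻¹; -s, s + s⁻¹])
    (h₁ : ρ₁ = !![-(s ^ (-2 : ℤ)), s ^ (-2 : ℤ); 0, 1])
    (h₂ : ρ₂ = !![1, 0; 1, -(s ^ (-2 : ℤ))]) :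
    ρ₁ᴴ * J * ρ₁ = J ∧ ρ₂ᴴ * J * ρ₂ = J := by
  have hstar : star s * s = 1 := by
    rw [Complex.star_def, Complex.conj_mul', hs, Complex.ofReal_one, one_pow]
  subst hJ h₁ h₂
  exact ⟨conjTranspose_burau₁_mul_squierForm_mul_burau₁ hstar,
    conjTranspose_burau₂_mul_squierForm_mul_burau₂ hstar⟩
end

section
/- Let α be real irrational. The form on H_{3,α} is definite (positive or negative) if and only if 1/3 + 2k < α < 5/3 + 2k for some integer k. -/
open Real

lemma cos_lt_half_of_mem (t : ℝ) (h1 : 1/3 < t) (h2 : t < 5/3) :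
    Real.cos (Real.pi * t) < 1/2 := by
  have hpi := Real.pi_pos
  rcases le_or_gt t 1 with h | h
  · have : Real.cos (Real.pi * t) < Real.cos (Real.pi / 3) := by
      apply Real.cos_lt_cos_of_nonneg_of_le_pi (by positivity) (by nlinarith) (by nlinarith)
    simpa [Real.cos_pi_div_three] using this
  · have heq : Real.cos (Real.pi * t) = Real.cos (2 * Real.pi - Real.pi * t) := by
      rw [Real.cos_two_pi_sub]
    rw [heq]
    have : Real.cos (2 * Real.pi - Real.pi * t) < Real.cos (Real.pi / 3) := by
      apply Real.cos_lt_cos_of_nonneg_of_le_pi (by positivity) (by nlinarith) (by nlinarith)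
    simpa [Real.cos_pi_div_three] using this

lemma half_le_cos_of_mem (t : ℝ) (h1 : 5/3 ≤ t) (h2 : t < 7/3) :
    1/2 ≤ Real.cos (Real.pi * t) := by
  have hpi := Real.pi_pos
  have heq : Real.cos (Real.pi * t) = Real.cos (Real.pi * t - 2 * Real.pi) := by
    rw [Real.cos_sub_two_pi]
  rw [heq, ← Real.cos_abs]
  have habs : |Real.pi * t - 2 * Real.pi| ≤ Real.pi / 3 := by
    rw [abs_le]; constructor <;> nlinarith
  have : Real.cos (Real.pi / 3) ≤ Real.cos |Real.pi * t - 2 * Real.pi| := by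
    apply Real.cos_le_cos_of_nonneg_of_le_pi (abs_nonneg _) (by nlinarith) habs
  simpa [Real.cos_pi_div_three] using this

/-- Definiteness of the Hermitian form on `H_{3,α}`: for irrational real `α`,
`n₁² = 2 sin(πα/2)` and `n₂² = 2 sin(πα/2)(1 − 2cos(πα))` are both nonzero of
the same sign iff `α ∈ (1/3 + 2k, 5/3 + 2k)` for some `k ∈ ℤ`. -/
theorem form_definite_iff (α : ℝ) (hα : Irrational α) :
    (0 < (2 * Real.sin (Real.pi * α / 2)) *
      (2 * Real.sin (Real.pi * α / 2) * (1 - 2 * Real.cos (Real.pi * α))))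
    ↔ ∃ k : ℤ, 1 / 3 + 2 * (k : ℝ) < α ∧ α < 5 / 3 + 2 * (k : ℝ) := by
  have hpi := Real.pi_pos
  have hs : Real.sin (Real.pi * α / 2) ≠ 0 := by
    intro h
    rw [Real.sin_eq_zero_iff] at h
    obtain ⟨n, hn⟩ := h
    apply hα.ne_int (2 * n)
    push_cast
    field_simp at hn
    nlinarith
  have hs2 : 0 < (2 * Real.sin (Real.pi * α / 2))^2 := by positivity
  have key : (0 < (2 * Real.sin (Real.pi * α / 2)) *
      (2 * Real.sin (Real.pi * α / 2) * (1 - 2 * Real.cos (Real.pi * α))))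
      ↔ Real.cos (Real.pi * α) < 1/2 := by
    constructor
    · intro h
      nlinarith
    · intro h
      nlinarith
  rw [key]
  constructor
  · intro h
    refine ⟨⌊(α - 1/3)/2⌋, ?_, ?_⟩
    · have := Int.floor_le ((α - 1/3)/2)
      have hne : (⌊(α - 1/3)/2⌋ : ℝ) ≠ (α - 1/3)/2 := by
        intro heq
        exact (hα.ne_rat (1/3 + 2 * (⌊(α - 1/3)/2⌋ : ℚ))) (by push_cast; linarith)
      have := lt_of_le_of_ne this hne
      linarith
    · by_contra hc
      push_neg at hc
      have h2 := Int.lt_floor_add_one ((α - 1/3)/2)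
      have h5 : (5:ℝ)/3 ≤ α - 2 * (⌊(α - 1/3)/2⌋ : ℝ) := by linarith
      have h7 : α - 2 * (⌊(α - 1/3)/2⌋ : ℝ) < 7/3 := by linarith
      have := half_le_cos_of_mem (α - 2 * (⌊(α - 1/3)/2⌋ : ℝ)) h5 h7
      rw [show Real.pi * (α - 2 * (⌊(α - 1/3)/2⌋ : ℝ)) =
        Real.pi * α + (-⌊(α - 1/3)/2⌋ : ℤ) * (2 * Real.pi) by push_cast; ring,
        Real.cos_add_int_mul_two_pi] at this
      linarith
  · rintro ⟨k, h1, h2⟩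
    have := cos_lt_half_of_mem (α - 2 * (k:ℝ)) (by linarith) (by linarith)
    rw [show Real.pi * (α - 2 * (k:ℝ)) = Real.pi * α + (-k : ℤ) * (2 * Real.pi) by
      push_cast; ring, Real.cos_add_int_mul_two_pi] at this
    exact this
end

section
/- The half-twist squares to a scalar: with σ_1 = diag(q^{(α+1)²/2}, q^{(α−1)²/2}) and σ_2 = A^{−1} σ_1 A for A = (1/[2α])·[[−[α+1], [3α+3]],[[α+1],[α+1]]], one has (σ_1σ_2σ_1)² = i e^{(3/2)iπα²} · Id, where q^x = e^{iπx/2} and [x] = (q^x − q^{−x})/(q − q^{−1}). -/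
/-!
For a `2 × 2` matrix `M`, Cayley–Hamilton gives `M² = tr M • M - det M • 1`, so it suffices that
`M = σ₁ σ₂ σ₁` is traceless; then `M² = -(det σ₁)³ = -q^{3(α² + 1)} = i q^{3α²}`.
With `t = q^α` one has `σ₁ = q^{(α² + 1)/2} diag(t, t⁻¹)`, `[α + 1] = (t + t⁻¹)/2` and
`[3α + 3] = -(t³ + t⁻³)/2`, and the trace of `D A⁻¹ D A D` for `D = diag(a, b)` is
`((a³ + b³) A₁₁A₂₂ - ab(a + b) A₁₂A₂₁) / det A`, which vanishes here because
`t³ + t⁻³ = (t + t⁻¹)(t² - 1 + t⁻²)`. Finally `det A = -1` because `t⁴ = e^{2πiα} ≠ 1`.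
-/

open Matrix Complex

/-- `q^x = e^{iπx/2}` -/
noncomputable def qpow (x : ℂ) : ℂ := Complex.exp (Real.pi * Complex.I * x / 2)

/-- quantum integer `[x] = (q^x - q^{-x})/(q - q^{-1})` -/
noncomputable def qint (x : ℂ) : ℂ := (qpow x - qpow (-x)) / (qpow 1 - qpow (-1))

namespace Matrix

theorem sq_eq_neg_det_smul_one_of_trace_eq_zero {R : Type*} [CommRing R]
    {M : Matrix (Fin 2) (Fin 2) R} (h : M.trace = 0) : M ^ 2 = -M.det • 1 := by
  nontriviality R
  have := M.aeval_self_charpoly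
  rw [charpoly_fin_two, h] at this
  simp only [map_zero, zero_mul, sub_zero, map_add, map_pow, Polynomial.aeval_X,
    Polynomial.aeval_C, Algebra.algebraMap_eq_smul_one] at this
  rw [neg_smul, eq_neg_iff_add_eq_zero, this]

theorem trace_diagonal_mul_conj_mul_diagonal {K : Type*} [Field K] (a b p q r s : K) :
    trace (!![a, 0; 0, b] * ((!![p, q; r, s])⁻¹ * !![a, 0; 0, b] * !![p, q; r, s]) *
      !![a, 0; 0, b]) =
      ((a ^ 3 + b ^ 3) * p * s - a * b * (a + b) * q * r) / (p * s - q * r) := by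
  rw [inv_def, det_fin_two_of, adjugate_fin_two_of, Ring.inverse_eq_inv']
  simp only [Matrix.smul_mul, Matrix.mul_smul, trace_smul, mul_fin_two, trace_fin_two_of,
    smul_eq_mul]
  ring

theorem det_mul_conj_mul {n K : Type*} [Fintype n] [DecidableEq n] [Field K]
    {A : Matrix n n K} (hA : A.det ≠ 0) (D E F : Matrix n n K) :
    det (D * (A⁻¹ * E * A) * F) = D.det * E.det * F.det := by
  simp only [det_mul, det_nonsing_inv, Ring.inverse_eq_inv']
  field_simp

end Matrix

theorem qpow_add (x y : ℂ) : qpow (x + y) = qpow x * qpow y := by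
  simp only [qpow, mul_add, add_div, exp_add]

theorem qpow_neg (x : ℂ) : qpow (-x) = (qpow x)⁻¹ := by
  simp only [qpow, mul_neg, neg_div, exp_neg]

theorem qpow_natCast_mul (n : ℕ) (x : ℂ) : qpow (n * x) = qpow x ^ n := by
  rw [qpow, qpow, ← exp_nat_mul]
  ring_nf

theorem qpow_one : qpow 1 = I := by
  rw [qpow, mul_one, mul_div_right_comm, exp_pi_div_two_mul_I]

theorem qpow_natCast (n : ℕ) : qpow n = I ^ n := by
  rw [← mul_one (n : ℂ), qpow_natCast_mul, qpow_one]

theorem qpow_pow_four_eq_one_iff (x : ℂ) : qpow x ^ 4 = 1 ↔ ∃ n : ℤ, x = n := by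
  have hπ : (2 * Real.pi * I : ℂ) ≠ 0 := by simp [Real.pi_ne_zero, I_ne_zero]
  rw [← qpow_natCast_mul, qpow, exp_eq_one_iff]
  refine exists_congr fun n => ?_
  rw [Nat.cast_ofNat, show Real.pi * I * (4 * x) / 2 = 2 * Real.pi * I * x by ring,
    mul_comm (n : ℂ), mul_right_inj' hπ]

theorem qint_eq (x : ℂ) : qint x = (qpow x - (qpow x)⁻¹) / (2 * I) := by
  rw [qint, qpow_neg, qpow_neg, qpow_one, inv_I]
  ring

theorem qint_add_one (x : ℂ) : qint (x + 1) = (qpow x + (qpow x)⁻¹) / 2 := by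
  rw [qint_eq, qpow_add, qpow_one, mul_inv, inv_I]
  field_simp
  ring


theorem qint_two_mul (x : ℂ) : qint (2 * x) = (qpow x ^ 2 - (qpow x ^ 2)⁻¹) / (2 * I) := by
  rw [qint_eq, ← Nat.cast_ofNat, qpow_natCast_mul]

theorem qint_three_mul_add_three (x : ℂ) :
    qint (3 * x + 3) = -(qpow x ^ 3 + (qpow x ^ 3)⁻¹) / 2 := by
  rw [show 3 * x + 3 = ((3 : ℕ) * x + (2 : ℕ)) + 1 by push_cast; ring, qint_add_one, qpow_add,
    qpow_natCast_mul, qpow_natCast, I_sq]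
  ring

theorem neg_qpow_add_one_pow_three (x : ℂ) : -qpow (x + 1) ^ 3 = I * qpow (3 * x) := by
  rw [← qpow_natCast_mul, show ((3 : ℕ) : ℂ) * (x + 1) = 3 * x + (3 : ℕ) by push_cast; ring,
    qpow_add, qpow_natCast, pow_three, I_mul_I]
  ring

noncomputable def sigmaOne (x : ℂ) : Matrix (Fin 2) (Fin 2) ℂ :=
  !![qpow ((x + 1) ^ 2 / 2), 0; 0, qpow ((x - 1) ^ 2 / 2)]

noncomputable def conjugator (x : ℂ) : Matrix (Fin 2) (Fin 2) ℂ :=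
  (qint (2 * x))⁻¹ • !![-(qint (x + 1)), qint (3 * x + 3); qint (x + 1), qint (x + 1)]

theorem sigmaOne_eq (x : ℂ) :
    sigmaOne x =
      !![qpow ((x ^ 2 + 1) / 2) * qpow x, 0; 0, qpow ((x ^ 2 + 1) / 2) * (qpow x)⁻¹] := by
  rw [sigmaOne, ← qpow_add, ← qpow_neg, ← qpow_add]
  ring_nf

theorem conjugator_eq (x : ℂ) : conjugator x =
    let c := (qint (2 * x))⁻¹
    !![c * -qint (x + 1), c * qint (3 * x + 3); c * qint (x + 1), c * qint (x + 1)] := by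
  ext i j
  fin_cases i <;> fin_cases j <;> rfl

theorem det_sigmaOne (x : ℂ) : det (sigmaOne x) = qpow (x ^ 2 + 1) := by
  rw [sigmaOne, det_fin_two_of, mul_zero, sub_zero, ← qpow_add]
  ring_nf

theorem det_conjugator {x : ℂ} (hx : qpow x ^ 4 ≠ 1) : det (conjugator x) = -1 := by
  have ht : qpow x ≠ 0 := exp_ne_zero _
  have h4 : qpow x ^ 4 - 1 ≠ 0 := sub_ne_zero.2 hx
  rw [conjugator, det_smul, Fintype.card_fin, det_fin_two_of, qint_two_mul, qint_add_one,
    qint_three_mul_add_three]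
  field_simp
  linear_combination (qpow x ^ 4 - 1) ^ 2 * I_sq

theorem trace_sigmaOne_mul_conj_mul_sigmaOne (x : ℂ) :
    trace (sigmaOne x * ((conjugator x)⁻¹ * sigmaOne x * conjugator x) * sigmaOne x) = 0 := by
  rw [sigmaOne_eq, conjugator_eq, trace_diagonal_mul_conj_mul_diagonal, div_eq_zero_iff]
  left
  rw [qint_add_one, qint_three_mul_add_three]
  field_simp
  ring

/-- The half-twist squares to the scalar `i e^{3iπα²/2}`. -/
theorem half_twist_squared (α : ℝ) (hα : Irrational α)
    (σ₁ A σ₂ : Matrix (Fin 2) (Fin 2) ℂ)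
    (hσ₁ : σ₁ = !![qpow (((α : ℂ) + 1) ^ 2 / 2), 0; 0, qpow (((α : ℂ) - 1) ^ 2 / 2)])
    (hA : A = (qint (2 * (α : ℂ)))⁻¹ •
      !![-(qint ((α : ℂ) + 1)), qint (3 * (α : ℂ) + 3);
         qint ((α : ℂ) + 1), qint ((α : ℂ) + 1)])
    (hσ₂ : σ₂ = A⁻¹ * σ₁ * A) :
    (σ₁ * σ₂ * σ₁) ^ 2 =
      (Complex.I * Complex.exp (3 * Real.pi * Complex.I * (α : ℂ) ^ 2 / 2)) •
        (1 : Matrix (Fin 2) (Fin 2) ℂ) := by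
  have hα4 : qpow α ^ 4 ≠ 1 := by
    rw [ne_eq, qpow_pow_four_eq_one_iff]
    rintro ⟨n, hn⟩
    exact hα.ne_int n (mod_cast hn)
  rw [hσ₂, show σ₁ = sigmaOne α from hσ₁, show A = conjugator α from hA,
    sq_eq_neg_det_smul_one_of_trace_eq_zero (trace_sigmaOne_mul_conj_mul_sigmaOne α),
    det_mul_conj_mul (by rw [det_conjugator hα4]; norm_num), det_sigmaOne, ← pow_three',
    neg_qpow_add_one_pow_three, qpow]
  ring_nf
end
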